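/- arXiv:2401.15361 — 2 statements merged into one kernel-verified Lean document; each statement's English description precedes it below -/
import Mathlib

section
/- Fix integers d ≥ 2 and 0 ≤ k ≤ d−1. Then the sequence of rational numbers F(d−2,n,k) / Ffac(d,n) tends to 0 as n → ∞. -/
noncomputable section

/-- `ρ(d,k) = (1/2)(binom(⌈d/2⌉,k) + binom(⌊d/2⌋,k))`. -/
def rho (d k : ℕ) : ℚ :=
  (((d + 1) / 2).choose k + (d / 2).choose k) / 2

/-- Extended binomial coefficient: `binom(a,b) = 0` unless `0 ≤ b ≤ a`. -/
def ichoose (a b : ℤ) : ℤ :=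
  if 0 ≤ b ∧ b ≤ a then (a.toNat).choose b.toNat else 0

/-- `δ(d) = ⌈d/2⌉ - ⌊d/2⌋`. -/
def deltaPar (d : ℕ) : ℕ := (d + 1) / 2 - d / 2

/-- `F(d,n,k)`, the number of `k`-faces of the cyclic polytope `C(d,n)` (for `d ≥ 2`). -/
def Fcyc (d n k : ℕ) : ℚ :=
  (((n : ℚ) - (deltaPar d : ℚ) * ((n : ℚ) - (k : ℚ) - 2)) / ((n : ℚ) - (k : ℚ) - 1)) *
    ∑ j ∈ Finset.range (d / 2 + 1),
      (ichoose ((n : ℤ) - 1 - (j : ℤ)) ((k : ℤ) + 1 - (j : ℤ)) : ℚ) *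
        (ichoose ((n : ℤ) - (k : ℤ) - 1) (2 * (j : ℤ) - (k : ℤ) - 1 + (deltaPar d : ℤ)) : ℚ)

/-- `Ffac(d,n)`, the number of facets of the cyclic polytope `C(d,n)` (for `d ≥ 2`). -/
def Ffac (d n : ℕ) : ℚ :=
  (ichoose ((n : ℤ) - (((d + 1) / 2 : ℕ) : ℤ)) ((n : ℤ) - (d : ℤ)) : ℚ) +
    (ichoose ((n : ℤ) - (((d + 2) / 2 : ℕ) : ℤ)) ((n : ℤ) - (d : ℤ)) : ℚ)

open Polynomial Finset Filter

/-- the polynomial `x ↦ binom(x - a, b)` -/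
noncomputable def chP (b : ℕ) (a : ℤ) : ℚ[X] :=
  C ((b.factorial : ℚ)⁻¹) * (descPochhammer ℚ b).comp (X - C (a : ℚ))

lemma ichoose_natCast (m b : ℕ) : ichoose (m : ℤ) (b : ℤ) = (m.choose b : ℤ) := by
  unfold ichoose
  by_cases h : b ≤ m
  · simp [Int.toNat_natCast, h, Int.ofNat_le.mpr h]
  · rw [if_neg, Nat.choose_eq_zero_of_lt (by omega)]
    · simp
    · push_neg; intro _; exact_mod_cast by omega

lemma ichoose_neg (a b : ℤ) (h : b < 0) : ichoose a b = 0 := by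
  unfold ichoose; rw [if_neg]; omega

lemma chP_natDegree_le (b : ℕ) (a : ℤ) : (chP b a).natDegree ≤ b := by
  refine (natDegree_mul_le).trans ?_
  rw [natDegree_C, zero_add]
  refine (natDegree_comp_le).trans ?_
  rw [descPochhammer_natDegree, natDegree_X_sub_C, mul_one]

lemma chP_coeff_self (b : ℕ) (a : ℤ) : (chP b a).coeff b = (b.factorial : ℚ)⁻¹ := by
  have hmon : ((descPochhammer ℚ b).comp (X - C (a : ℚ))).Monic := by
    have := (monic_descPochhammer ℚ b).comp (monic_X_sub_C ((a : ℚ))) (by rw [natDegree_X_sub_C]; omega)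
    exact this
  have hdeg : ((descPochhammer ℚ b).comp (X - C (a : ℚ))).natDegree = b := by
    rw [natDegree_comp, descPochhammer_natDegree, natDegree_X_sub_C, mul_one]
  have h1 := hmon.coeff_natDegree
  rw [hdeg] at h1
  rw [chP, coeff_C_mul, h1, mul_one]

lemma chP_eval (b : ℕ) (a : ℤ) (n : ℕ) (h : a + b ≤ n) :
    ((ichoose ((n : ℤ) - a) b : ℤ) : ℚ) = (chP b a).eval (n : ℚ) := by
  set m : ℕ := ((n : ℤ) - a).toNat with hm
  have hma : (m : ℤ) = (n : ℤ) - a := Int.toNat_of_nonneg (by omega)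
  have hbm : b ≤ m := by omega
  rw [show ((n : ℤ) - a) = (m : ℤ) from hma.symm, ichoose_natCast]
  rw [chP, eval_mul, eval_C, eval_comp, eval_sub, eval_X, eval_C]
  rw [show (n : ℚ) - (a : ℚ) = (m : ℚ) by exact_mod_cast (congrArg (fun z : ℤ => (z : ℚ)) hma).symm]
  rw [descPochhammer_eval_eq_descFactorial, Nat.descFactorial_eq_factorial_mul_choose]
  push_cast
  have hb : (b.factorial : ℚ) ≠ 0 := by exact_mod_cast Nat.factorial_ne_zero b
  field_simp

lemma chP_eval_symm (dd a : ℕ) (ha : a ≤ dd) (n : ℕ) (h : dd ≤ n) :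
    ((ichoose ((n : ℤ) - a) ((n : ℤ) - dd) : ℤ) : ℚ) = (chP (dd - a) a).eval (n : ℚ) := by
  rw [show ((n : ℤ) - dd) = ((n - dd : ℕ) : ℤ) by omega,
    show ((n : ℤ) - a) = ((n - a : ℕ) : ℤ) by omega, ichoose_natCast,
    show n - dd = (n - a) - (dd - a) by omega, Nat.choose_symm (by omega)]
  have h2 := chP_eval (dd - a) a n (by omega)
  rw [show ((n : ℤ) - a) = ((n - a : ℕ) : ℤ) by omega, ichoose_natCast] at h2
  exact_mod_cast h2

noncomputable def Apoly (d' k : ℕ) : ℚ[X] :=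
  X - C ((deltaPar d' : ℕ) : ℚ) * (X - C ((k : ℚ) + 2))

noncomputable def Tpoly (d' k j : ℕ) : ℚ[X] :=
  if j ≤ k + 1 ∧ k + 1 ≤ 2 * j + deltaPar d' then
    chP (k + 1 - j) (1 + (j : ℤ)) * chP (2 * j + deltaPar d' - (k + 1)) ((k : ℤ) + 1)
  else 0

noncomputable def Spoly (d' k : ℕ) : ℚ[X] := ∑ j ∈ Finset.range (d' / 2 + 1), Tpoly d' k j

noncomputable def Qfpoly (d : ℕ) : ℚ[X] :=
  chP (d - (d + 1) / 2) ((((d + 1) / 2 : ℕ) : ℤ)) + chP (d - (d + 2) / 2) ((((d + 2) / 2 : ℕ) : ℤ))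

lemma Fcyc_eq (d' k n : ℕ) (hn : d' + k + 4 ≤ n) :
    Fcyc d' n k =
      (Apoly d' k).eval (n : ℚ) / ((X - C ((k : ℚ) + 1)).eval (n : ℚ)) * (Spoly d' k).eval (n : ℚ) := by
  have hδ : deltaPar d' ≤ 1 := by unfold deltaPar; omega
  have hAe : (Apoly d' k).eval (n : ℚ) = (n : ℚ) - (deltaPar d' : ℚ) * ((n : ℚ) - k - 2) := by
    simp only [Apoly, eval_sub, eval_mul, eval_X, eval_C]; ring
  have hBe : ((X - C ((k : ℚ) + 1)).eval (n : ℚ)) = (n : ℚ) - k - 1 := by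
    simp only [eval_sub, eval_X, eval_C]; ring
  rw [hAe, hBe, Fcyc]
  congr 1
  rw [Spoly, eval_finset_sum]
  refine Finset.sum_congr rfl fun j hj => ?_
  have hj' : j ≤ d' / 2 := by
    simp only [Finset.mem_range] at hj; omega
  by_cases h : j ≤ k + 1 ∧ k + 1 ≤ 2 * j + deltaPar d'
  · rw [Tpoly, if_pos h, eval_mul]
    congr 1
    · have h1 := chP_eval (k + 1 - j) (1 + (j : ℤ)) n (by push_cast; omega)
      rw [show (n : ℤ) - 1 - (j : ℤ) = (n : ℤ) - (1 + (j : ℤ)) by ring,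
        show (k : ℤ) + 1 - (j : ℤ) = ((k + 1 - j : ℕ) : ℤ) by omega, h1]
    · have h2 := chP_eval (2 * j + deltaPar d' - (k + 1)) ((k : ℤ) + 1) n (by push_cast; omega)
      rw [show (n : ℤ) - (k : ℤ) - 1 = (n : ℤ) - ((k : ℤ) + 1) by ring,
        show 2 * (j : ℤ) - (k : ℤ) - 1 + ((deltaPar d' : ℕ) : ℤ)
            = ((2 * j + deltaPar d' - (k + 1) : ℕ) : ℤ) by omega, h2]
  · rw [Tpoly, if_neg h, eval_zero]
    rcases (by omega : k + 2 ≤ j ∨ 2 * j + deltaPar d' ≤ k) with h' | h'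
    · rw [ichoose_neg ((n : ℤ) - 1 - j) _ (by omega), Int.cast_zero, zero_mul]
    · rw [ichoose_neg ((n : ℤ) - k - 1) _ (by omega), Int.cast_zero, mul_zero]

lemma Ffac_eq (d n : ℕ) (hd : 2 ≤ d) (hn : d ≤ n) : Ffac d n = (Qfpoly d).eval (n : ℚ) := by
  rw [Ffac, Qfpoly, eval_add,
    ← chP_eval_symm d ((d + 1) / 2) (by omega) n hn,
    ← chP_eval_symm d ((d + 2) / 2) (by omega) n hn]

lemma Apoly_natDegree_le (d' k : ℕ) : (Apoly d' k).natDegree ≤ 1 - deltaPar d' := by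
  have hδ : deltaPar d' = 0 ∨ deltaPar d' = 1 := by unfold deltaPar; omega
  rcases hδ with h | h
  · rw [Apoly, h]
    simp only [Nat.cast_zero, map_zero, zero_mul, sub_zero]
    simp [natDegree_X]
  · rw [Apoly, h]
    simp only [Nat.cast_one, map_one, one_mul]
    have : (X : ℚ[X]) - (X - C ((k : ℚ) + 2)) = C ((k : ℚ) + 2) := by ring
    rw [this]
    simp [natDegree_C]

lemma Spoly_natDegree_le (d' k : ℕ) : (Spoly d' k).natDegree ≤ d' / 2 + deltaPar d' := by
  rw [Spoly]
  refine natDegree_sum_le_of_forall_le _ _ fun j hj => ?_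
  simp only [Finset.mem_range] at hj
  rw [Tpoly]
  split_ifs with h
  · refine natDegree_mul_le.trans ?_
    have := chP_natDegree_le (k + 1 - j) (1 + (j : ℤ))
    have := chP_natDegree_le (2 * j + deltaPar d' - (k + 1)) ((k : ℤ) + 1)
    omega
  · simp

lemma Qfpoly_degree (d : ℕ) (hd : 2 ≤ d) : (Qfpoly d).degree = (d / 2 : ℕ) := by
  have hb1 : d - (d + 1) / 2 = d / 2 := by omega
  have hle : (Qfpoly d).natDegree ≤ d / 2 := by
    rw [Qfpoly]
    refine natDegree_add_le_of_degree_le ((chP_natDegree_le _ _).trans (by omega))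
      ((chP_natDegree_le _ _).trans (by omega))
  have hc : (Qfpoly d).coeff (d / 2) ≠ 0 := by
    have hf : ((d / 2).factorial : ℚ)⁻¹ ≠ 0 :=
      inv_ne_zero (by exact_mod_cast Nat.factorial_ne_zero _)
    rw [Qfpoly, coeff_add]
    rcases (by omega : d % 2 = 0 ∨ d % 2 = 1) with h | h
    · rw [hb1, chP_coeff_self,
        coeff_eq_zero_of_natDegree_lt ((chP_natDegree_le _ _).trans_lt (by omega)), add_zero]
      exact hf
    · rw [hb1, chP_coeff_self, show d - (d + 2) / 2 = d / 2 by omega, chP_coeff_self]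
      intro hcontra
      have : ((d / 2).factorial : ℚ)⁻¹ = 0 := by linarith [inv_nonneg.mpr (by positivity : (0:ℚ) ≤ ((d / 2).factorial : ℚ))]
      exact hf this
  exact le_antisymm (natDegree_le_iff_degree_le.mp hle) (le_degree_of_ne_zero hc)


/-- For fixed `d ≥ 2` and `0 ≤ k ≤ d-1`,
`F(d-2,n,k) / Ffac(d,n) → 0` as `n → ∞`. -/
theorem cyclic_ratio_tendsto_zero (d k : ℕ) (hd : 2 ≤ d) (hk : k + 1 ≤ d) :
    Filter.Tendsto (fun n : ℕ => Fcyc (d - 2) n k / Ffac d n)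
      Filter.atTop (nhds 0) := by
  set d' := d - 2 with hd'
  set P : ℚ[X] := Apoly d' k * Spoly d' k with hP
  set Q : ℚ[X] := (X - C ((k : ℚ) + 1)) * Qfpoly d with hQ
  have hδ : deltaPar d' ≤ 1 := by unfold deltaPar; omega
  have hPdeg : P.degree ≤ ((d / 2 : ℕ) : WithBot ℕ) := by
    refine natDegree_le_iff_degree_le.mp ?_
    refine natDegree_mul_le.trans ?_
    have h1 := Apoly_natDegree_le d' k
    have h2 := Spoly_natDegree_le d' k
    omega
  have hQdeg : Q.degree = ((d / 2 + 1 : ℕ) : WithBot ℕ) := by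
    rw [hQ, degree_mul, degree_X_sub_C, Qfpoly_degree d hd]
    rw [show ((d / 2 + 1 : ℕ) : WithBot ℕ) = ((1 : ℕ) : WithBot ℕ) + ((d / 2 : ℕ) : WithBot ℕ) by
      push_cast; ring]
    norm_num
  have hdeg : P.degree < Q.degree := by
    rw [hQdeg]
    refine lt_of_le_of_lt hPdeg ?_
    exact_mod_cast Nat.lt_succ_self _
  have htend := (Polynomial.div_tendsto_zero_of_degree_lt P Q hdeg).comp
    (tendsto_natCast_atTop_atTop (R := ℚ))
  refine Filter.Tendsto.congr' ?_ htend
  filter_upwards [Filter.eventually_ge_atTop (d + k + 4)] with n hn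
  have h1 : Fcyc d' n k =
      (Apoly d' k).eval (n : ℚ) / ((X - C ((k : ℚ) + 1)).eval (n : ℚ)) * (Spoly d' k).eval (n : ℚ) :=
    Fcyc_eq d' k n (by omega)
  have h2 : Ffac d n = (Qfpoly d).eval (n : ℚ) := Ffac_eq d n hd (by omega)
  simp only [Function.comp_apply, hP, hQ, eval_mul]
  rw [h1, h2, div_mul_eq_mul_div, div_div]
end
end

section
/- Fix integers d ≥ 2 and 0 ≤ k ≤ d−1. Then the sequence of rational numbers F(d,n,k) / Ffac(d,n) tends to ρ(d, d−k−1) as n → ∞. -/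
noncomputable section

/-!
With `h = ⌊d/2⌋`, both counts grow like `n ^ h`. The facet count is a sum of two binomial
coefficients in `n`, of degrees `h` and `h - 1 + δ`, so `Ffac d n / n ^ h → (1 + δ) / h!`.
In `Fcyc` the `j`-th summand is a product of two binomial coefficients of total degree `j + δ`,
so after dividing by `n ^ ⌈d/2⌉` only `j = h` survives, while the prefactor behaves like `n ^ (-δ)`:
this gives `Fcyc d n k / n ^ h → (1 + δ (k + 1)) · binom(⌈d/2⌉, d-k-1) / ⌈d/2⌉!`.
The ratio of the two leading coefficients is `ρ(d, d-k-1)`; for odd `d` this is the identity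
`(h + 1) binom(h, s) = (h + 1 - s) binom(h + 1, s)` with `s = d - k - 1`.
-/

open Filter Topology Asymptotics Nat

lemma ichoose_of_neg (a : ℤ) {b : ℤ} (hb : b < 0) : ichoose a b = 0 := by
  rw [ichoose, if_neg (by omega)]

lemma ichoose_natCast_sub {n a : ℕ} (r : ℕ) (ha : a ≤ n) :
    ichoose ((n : ℤ) - a) r = (n - a).choose r := by
  unfold ichoose
  split_ifs with h
  · congr 2; omega
  · rw [Nat.choose_eq_zero_of_lt (by omega), Nat.cast_zero]

lemma ichoose_natCast_sub_symm {n c e : ℕ} (hce : c ≤ e) (hen : e ≤ n) :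
    ichoose ((n : ℤ) - c) ((n : ℤ) - e) = (n - c).choose (e - c) := by
  rw [ichoose, if_pos (by omega), ← Nat.choose_symm (by omega)]
  congr 2 <;> omega

lemma tendsto_choose_div_pow (r : ℕ) :
    Tendsto (fun n : ℕ => (n.choose r : ℚ) / n ^ r) atTop (𝓝 (r ! : ℚ)⁻¹) := by
  rw [Rat.isEmbedding_coe_real.tendsto_nhds_iff]
  have hequiv := (isEquivalent_choose r).div (IsEquivalent.refl (u := fun n : ℕ => (n : ℝ) ^ r))
  refine (hequiv.symm.tendsto_nhds ?_).congr fun n => by simp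
  refine tendsto_const_nhds.congr' ?_
  filter_upwards [eventually_ne_atTop 0] with n hn
  simp only [Pi.div_apply]
  push_cast
  field_simp

lemma tendsto_choose_sub_div_pow (a r : ℕ) :
    Tendsto (fun n : ℕ => ((n - a).choose r : ℚ) / n ^ r) atTop (𝓝 (r ! : ℚ)⁻¹) := by
  rw [← tendsto_add_atTop_iff_nat a]
  have hratio : Tendsto (fun n : ℕ => ((n : ℚ) / (n + a)) ^ r) atTop (𝓝 1) := by
    simpa using (tendsto_natCast_div_add_atTop (a : ℚ)).pow r
  refine ((tendsto_choose_div_pow r).mul hratio).congr' ?_ |>.trans (by rw [mul_one])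
  filter_upwards [eventually_ne_atTop 0] with n hn
  rw [Nat.add_sub_cancel, div_pow, Nat.cast_add]
  field_simp

lemma tendsto_div_pow_of_lt {f : ℕ → ℚ} {c : ℚ} {q p : ℕ}
    (hf : Tendsto (fun n => f n / n ^ q) atTop (𝓝 c)) (hqp : q < p) :
    Tendsto (fun n => f n / n ^ p) atTop (𝓝 0) := by
  have hinv : Tendsto (fun n : ℕ => ((n : ℚ)⁻¹) ^ (p - q)) atTop (𝓝 0) := by
    simpa [zero_pow (Nat.sub_ne_zero_of_lt hqp)] using
      (tendsto_inv_atTop_zero.comp (tendsto_natCast_atTop_atTop (R := ℚ))).pow (p - q)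
  refine (hf.mul hinv).congr' ?_ |>.trans (by rw [mul_zero])
  filter_upwards [eventually_ne_atTop 0] with n hn
  rw [inv_pow, ← div_eq_mul_inv, div_div, ← pow_add, Nat.add_sub_of_le hqp.le]

lemma tendsto_ichoose_mul_ichoose_div_pow (a b r s : ℕ) :
    Tendsto (fun n : ℕ => (ichoose ((n : ℤ) - a) r : ℚ) * ichoose ((n : ℤ) - b) s / n ^ (r + s))
      atTop (𝓝 (r ! * s ! : ℚ)⁻¹) := by
  refine ((tendsto_choose_sub_div_pow a r).mul (tendsto_choose_sub_div_pow b s)).congr' ?_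
    |>.trans (by rw [mul_inv])
  filter_upwards [eventually_ge_atTop (a + b)] with n hn
  rw [ichoose_natCast_sub r (by omega), ichoose_natCast_sub s (by omega), pow_add]
  push_cast
  ring

lemma tendsto_ichoose_mul_ichoose_div_pow_of_lt (a b : ℕ) {r s : ℤ} {p : ℕ} (hp : r + s < p) :
    Tendsto (fun n : ℕ => (ichoose ((n : ℤ) - a) r : ℚ) * ichoose ((n : ℤ) - b) s / n ^ p)
      atTop (𝓝 0) := by
  obtain hr | ⟨r, rfl⟩ := r.lt_or_le 0 |>.imp_right Int.eq_ofNat_of_zero_le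
  · simp [ichoose_of_neg _ hr]
  obtain hs | ⟨s, rfl⟩ := s.lt_or_le 0 |>.imp_right Int.eq_ofNat_of_zero_le
  · simp [ichoose_of_neg _ hs]
  exact tendsto_div_pow_of_lt (tendsto_ichoose_mul_ichoose_div_pow a b r s) (by omega)

lemma tendsto_ichoose_mul_ichoose_div_pow_eq (a b : ℕ) {r : ℤ} {s p : ℕ} (hp : r + s = p) :
    Tendsto (fun n : ℕ => (ichoose ((n : ℤ) - a) r : ℚ) * ichoose ((n : ℤ) - b) s / n ^ p)
      atTop (𝓝 (p.choose s / p ! : ℚ)) := by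
  obtain hr | ⟨r, rfl⟩ := r.lt_or_le 0 |>.imp_right Int.eq_ofNat_of_zero_le
  · simp [ichoose_of_neg _ hr, Nat.choose_eq_zero_of_lt (show p < s by omega)]
  obtain rfl : p = r + s := by omega
  convert tendsto_ichoose_mul_ichoose_div_pow a b r s using 2
  rw [Nat.cast_choose ℚ (Nat.le_add_left s r), Nat.add_sub_cancel]
  field_simp

lemma deltaPar_eq_mod_two (d : ℕ) : deltaPar d = d % 2 := by
  unfold deltaPar; omega

lemma tendsto_Ffac_div_pow {d : ℕ} (hd : 0 < d) :
    Tendsto (fun n : ℕ => Ffac d n / n ^ (d / 2)) atTop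
      (𝓝 ((1 + deltaPar d) / (d / 2)! : ℚ)) := by
  have hupper : Tendsto (fun n : ℕ => ((n - (d + 2) / 2).choose (d - (d + 2) / 2) : ℚ) / n ^ (d / 2))
      atTop (𝓝 (deltaPar d / (d / 2)! : ℚ)) := by
    rcases Nat.even_or_odd' d with ⟨h, rfl | rfl⟩
    · rw [show deltaPar (2 * h) = 0 by rw [deltaPar_eq_mod_two]; omega, Nat.cast_zero, zero_div]
      exact tendsto_div_pow_of_lt (tendsto_choose_sub_div_pow _ _) (by omega)
    · rw [show deltaPar (2 * h + 1) = 1 by rw [deltaPar_eq_mod_two]; omega, Nat.cast_one, one_div,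
        show 2 * h + 1 - (2 * h + 1 + 2) / 2 = (2 * h + 1) / 2 by omega]
      exact tendsto_choose_sub_div_pow _ _
  refine ((tendsto_choose_sub_div_pow ((d + 1) / 2) (d / 2)).add hupper).congr' ?_ |>.trans
    (by rw [add_div, one_div])
  filter_upwards [eventually_ge_atTop d] with n hn
  rw [Ffac, ichoose_natCast_sub_symm (by omega) hn, ichoose_natCast_sub_symm (by omega) hn,
    show d - (d + 1) / 2 = d / 2 by omega, Int.cast_natCast, Int.cast_natCast, add_div]

lemma tendsto_Fcyc_term_div_pow {d k j : ℕ} (hk : k + 1 ≤ d) (hj : j ≤ d / 2) :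
    Tendsto (fun n : ℕ => (ichoose ((n : ℤ) - 1 - (j : ℤ)) ((k : ℤ) + 1 - (j : ℤ)) : ℚ) *
        (ichoose ((n : ℤ) - (k : ℤ) - 1) (2 * (j : ℤ) - (k : ℤ) - 1 + (deltaPar d : ℤ)) : ℚ) /
          n ^ ((d + 1) / 2)) atTop
      (𝓝 (if j = d / 2 then (((d + 1) / 2).choose (d - k - 1) / ((d + 1) / 2)! : ℚ) else 0)) := by
  have hδ := deltaPar_eq_mod_two d
  have hshift : ∀ n : ℕ, (n : ℤ) - 1 - j = n - (1 + j : ℕ) ∧ (n : ℤ) - k - 1 = n - (k + 1 : ℕ) :=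
    fun n => by omega
  simp only [hshift]
  split_ifs with hjd
  · rw [show 2 * (j : ℤ) - k - 1 + deltaPar d = (d - k - 1 : ℕ) by omega]
    exact tendsto_ichoose_mul_ichoose_div_pow_eq _ _ (by omega)
  · exact tendsto_ichoose_mul_ichoose_div_pow_of_lt _ _ (by omega)

lemma tendsto_Fcyc_sum_div_pow {d k : ℕ} (hk : k + 1 ≤ d) :
    Tendsto (fun n : ℕ => (∑ j ∈ Finset.range (d / 2 + 1),
        (ichoose ((n : ℤ) - 1 - (j : ℤ)) ((k : ℤ) + 1 - (j : ℤ)) : ℚ) *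
          (ichoose ((n : ℤ) - (k : ℤ) - 1) (2 * (j : ℤ) - (k : ℤ) - 1 + (deltaPar d : ℤ)) : ℚ)) /
        n ^ ((d + 1) / 2)) atTop
      (𝓝 (((d + 1) / 2).choose (d - k - 1) / ((d + 1) / 2)! : ℚ)) := by
  have hterms := tendsto_finsetSum (Finset.range (d / 2 + 1)) fun j hj =>
    tendsto_Fcyc_term_div_pow hk (Nat.lt_succ_iff.mp (Finset.mem_range.mp hj))
  rw [Finset.sum_ite_eq' _ _ _, if_pos (Finset.self_mem_range_succ _)] at hterms
  simpa only [Finset.sum_div] using hterms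

lemma tendsto_pow_deltaPar_mul_Fcyc_prefactor (d k : ℕ) :
    Tendsto (fun n : ℕ => (n : ℚ) ^ deltaPar d *
        (((n : ℚ) - deltaPar d * ((n : ℚ) - k - 2)) / ((n : ℚ) - k - 1))) atTop
      (𝓝 (1 + deltaPar d * (k + 1) : ℚ)) := by
  have hratio : Tendsto (fun n : ℕ => (n : ℚ) / (n - k - 1)) atTop (𝓝 1) := by
    convert tendsto_natCast_div_add_atTop (-(k + 1 : ℚ)) using 3
    ring
  rcases Nat.mod_two_eq_zero_or_one d with hd | hd <;> rw [deltaPar_eq_mod_two, hd]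
  · simpa using hratio
  · convert hratio.const_mul ((k : ℚ) + 2) using 2 <;> push_cast <;> ring

lemma tendsto_Fcyc_div_pow {d k : ℕ} (hk : k + 1 ≤ d) :
    Tendsto (fun n : ℕ => Fcyc d n k / n ^ (d / 2)) atTop
      (𝓝 ((1 + deltaPar d * (k + 1)) *
        (((d + 1) / 2).choose (d - k - 1) / ((d + 1) / 2)! : ℚ))) := by
  refine ((tendsto_pow_deltaPar_mul_Fcyc_prefactor d k).mul
    (tendsto_Fcyc_sum_div_pow hk)).congr' ?_
  filter_upwards [eventually_ne_atTop 0] with n hn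
  rw [Fcyc, show (d + 1) / 2 = d / 2 + deltaPar d by rw [deltaPar_eq_mod_two]; omega, pow_add]
  field_simp

lemma leading_coeff_ratio_eq_rho {d k : ℕ} (hk : k + 1 ≤ d) :
    (1 + deltaPar d * (k + 1)) * (((d + 1) / 2).choose (d - k - 1) / ((d + 1) / 2)! : ℚ) /
      ((1 + deltaPar d) / (d / 2)!) = rho d (d - k - 1) := by
  rw [rho, deltaPar_eq_mod_two]
  rcases Nat.even_or_odd' d with ⟨h, rfl | rfl⟩
  · rw [show 2 * h % 2 = 0 by omega, show (2 * h + 1) / 2 = h by omega,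
      show 2 * h / 2 = h by omega]
    field_simp
    ring
  · rw [show (2 * h + 1) % 2 = 1 by omega, show (2 * h + 1 + 1) / 2 = h + 1 by omega,
      show (2 * h + 1) / 2 = h by omega]
    set s := 2 * h + 1 - k - 1
    rcases le_or_gt s (h + 1) with hs | hs
    · have hchoose := Nat.choose_mul_succ_eq h s
      have hks : (k : ℚ) = 2 * h - s := by
        rw [eq_sub_iff_add_eq]; exact_mod_cast (show k + s = 2 * h by omega)
      rw [Nat.factorial_succ]
      qify [hs] at hchoose
      field_simp
      push_cast
      linear_combination (-2 * (h ! : ℚ)) * hchoose + 2 * (h ! * (h + 1).choose s : ℚ) * hks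
    · rw [Nat.choose_eq_zero_of_lt hs, Nat.choose_eq_zero_of_lt (by omega)]
      simp

theorem cyclic_ratio_tendsto_rho_general (d k : ℕ) (hk : k + 1 ≤ d) :
    Filter.Tendsto (fun n : ℕ => Fcyc d n k / Ffac d n)
      Filter.atTop (nhds (rho d (d - k - 1))) := by
  rw [← leading_coeff_ratio_eq_rho hk]
  refine ((tendsto_Fcyc_div_pow hk).div (tendsto_Ffac_div_pow (by omega)) (by positivity)).congr' ?_
  filter_upwards [eventually_ne_atTop 0] with n hn
  exact div_div_div_cancel_right₀ (by positivity) _ _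

/-- For fixed `d ≥ 2` and `0 ≤ k ≤ d-1`,
`F(d,n,k) / Ffac(d,n) → ρ(d,d-k-1)` as `n → ∞`. -/
theorem cyclic_ratio_tendsto_rho (d k : ℕ) (hd : 2 ≤ d) (hk : k + 1 ≤ d) :
    Filter.Tendsto (fun n : ℕ => Fcyc d n k / Ffac d n)
      Filter.atTop (nhds (rho d (d - k - 1))) :=
  cyclic_ratio_tendsto_rho_general d k hk
end
end
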